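/- arXiv:2507.12371 — 4 statements merged into one kernel-verified Lean document; each statement's English description precedes it below -/
import Mathlib

section
/- Let α ∈ ℝ, let p ∈ ℝ³ be nonzero, let ν be a unit vector, and set h := ⟨ν,p⟩, p̃ := p/‖p‖², ν̃ := ν − 2hp/‖p‖², h̃ := ⟨ν̃,p̃⟩. If H ∈ ℝ satisfies H = α·h/‖p‖² (the α-stationarity equation at p), then the quantity H̃ := ‖p‖²·H + 4h (the mean curvature of the inverted surface at p̃) satisfies H̃ = −(α+4)·h̃/‖p̃‖², i.e. the −(α+4)-stationarity equation holds at p̃. -/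
open scoped InnerProductSpace

section Inversion

variable {E : Type*} [NormedAddCommGroup E] [InnerProductSpace ℝ E]

theorem norm_inv_norm_sq_smul_sq (p : E) : ‖(‖p‖ ^ 2)⁻¹ • p‖ ^ 2 = (‖p‖ ^ 2)⁻¹ := by
  rw [norm_smul, norm_inv, norm_pow, norm_norm, mul_pow, inv_pow, ← pow_mul]
  rcases eq_or_ne ‖p‖ 0 with hp | hp
  · simp [hp]
  · field_simp

/-- `ν - (2⟪ν, p⟫/‖p‖²) • p` is the reflection of `ν` in `pᗮ`: the normal transported by the
inversion `p ↦ p/‖p‖²`. -/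
theorem inner_reflection_inv_norm_sq_smul (ν p : E) :
    ⟪ν - (2 * ⟪ν, p⟫_ℝ / ‖p‖ ^ 2) • p, (‖p‖ ^ 2)⁻¹ • p⟫_ℝ = -⟪ν, p⟫_ℝ / ‖p‖ ^ 2 := by
  rw [real_inner_smul_right, inner_sub_left, real_inner_smul_left, real_inner_self_eq_norm_sq]
  rcases eq_or_ne ‖p‖ 0 with hp | hp
  · simp [hp]
  · field_simp
    ring

end Inversion

theorem stationary_equation_under_inversion_general (α : ℝ) (p ν : EuclideanSpace ℝ (Fin 3))
    (hp : p ≠ 0)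
    (h : ℝ) (hh : h = ⟪ν, p⟫_ℝ)
    (p' : EuclideanSpace ℝ (Fin 3)) (hp' : p' = (‖p‖ ^ 2)⁻¹ • p)
    (ν' : EuclideanSpace ℝ (Fin 3)) (hν' : ν' = ν - (2 * h / ‖p‖ ^ 2) • p)
    (h' : ℝ) (hh' : h' = ⟪ν', p'⟫_ℝ)
    (H : ℝ) (hH : H = α * h / ‖p‖ ^ 2)
    (H' : ℝ) (hH' : H' = ‖p‖ ^ 2 * H + 4 * h) :
    H' = -(α + 4) * h' / ‖p'‖ ^ 2 := by
  subst hh hp' hν' hh' hH hH'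
  rw [inner_reflection_inv_norm_sq_smul, norm_inv_norm_sq_smul_sq]
  have hp2 : ‖p‖ ^ 2 ≠ 0 := by positivity
  field_simp

/-- If `H = α·h/‖p‖²` (the α-stationarity equation at `p`), then the mean curvature
`H̃ = ‖p‖²H + 4h` of the inverted surface satisfies the `−(α+4)`-stationarity equation at
`p̃ = p/‖p‖²`, i.e. `H̃ = −(α+4)·h̃/‖p̃‖²` where `h̃ = ⟨ν̃,p̃⟩` and `ν̃ = ν − 2hp/‖p‖²`. -/
theorem stationary_equation_under_inversion (α : ℝ) (p ν : EuclideanSpace ℝ (Fin 3))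
    (hp : p ≠ 0) (hν : ‖ν‖ = 1)
    (h : ℝ) (hh : h = ⟪ν, p⟫_ℝ)
    (p' : EuclideanSpace ℝ (Fin 3)) (hp' : p' = (‖p‖ ^ 2)⁻¹ • p)
    (ν' : EuclideanSpace ℝ (Fin 3)) (hν' : ν' = ν - (2 * h / ‖p‖ ^ 2) • p)
    (h' : ℝ) (hh' : h' = ⟪ν', p'⟫_ℝ)
    (H : ℝ) (hH : H = α * h / ‖p‖ ^ 2)
    (H' : ℝ) (hH' : H' = ‖p‖ ^ 2 * H + 4 * h) :
    H' = -(α + 4) * h' / ‖p'‖ ^ 2 :=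
  stationary_equation_under_inversion_general α p ν hp h hh p' hp' ν' hν' h' hh' H hH H' hH'
end

section
/- Let r > 0 and let p ∈ ℝ³ be a nonzero point on the sphere of radius r centered at the point (0,0,r), i.e. ‖p − (0,0,r)‖ = r and p ≠ 0. Then, with the inward unit normal ν(p) = ((0,0,r) − p)/r, the point p satisfies the −4-stationarity equation with mean curvature H = 2/r: one has 2/r = −4·⟨ν(p), p⟩/‖p‖². -/
open scoped InnerProductSpace

/-- A sphere of radius `r` centered at `(0,0,r)` (which passes through the origin) is
`−4`-stationary: at every nonzero point `p` of the sphere, with inward unit normal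
`ν(p) = ((0,0,r) − p)/r` and mean curvature `H = 2/r`, one has
`2/r = −4⟨ν(p),p⟩/‖p‖²`. -/
theorem sphere_through_origin_is_minus_four_stationary (r : ℝ) (hr : 0 < r)
    (c : EuclideanSpace ℝ (Fin 3)) (hc : c = (WithLp.equiv 2 (Fin 3 → ℝ)).symm ![0, 0, r])
    (p : EuclideanSpace ℝ (Fin 3)) (hp : p ≠ 0)
    (hps : ‖p - c‖ = r) :
    2 / r = -4 * ⟪r⁻¹ • (c - p), p⟫_ℝ / ‖p‖ ^ 2 := by
  have hcc : ‖c‖ ^ 2 = r ^ 2 := by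
    subst hc
    rw [EuclideanSpace.norm_eq]
    rw [Real.sq_sqrt (by positivity)]
    simp [Fin.sum_univ_three, sq]
  have hsq : ‖p - c‖ ^ 2 = r ^ 2 := by rw [hps]
  rw [@norm_sub_sq_real] at hsq
  have key : ‖p‖ ^ 2 = 2 * ⟪p, c⟫_ℝ := by
    rw [hcc] at hsq; linarith
  have hip : ⟪r⁻¹ • (c - p), p⟫_ℝ = r⁻¹ * (⟪p, c⟫_ℝ - ⟪p, p⟫_ℝ) := by
    rw [real_inner_smul_left, inner_sub_left, real_inner_comm c p]
  have hpp : ⟪p, p⟫_ℝ = ‖p‖ ^ 2 := real_inner_self_eq_norm_sq p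
  have hnp : ‖p‖ ≠ 0 := norm_ne_zero_iff.mpr hp
  have hpc0 : ⟪p, c⟫_ℝ ≠ 0 := by
    intro h
    rw [h, mul_zero, pow_eq_zero_iff (by norm_num)] at key
    exact hnp key
  rw [hip, hpp, key]
  set i := ⟪p, c⟫_ℝ with hi
  field_simp
  ring
end

section
/- Let c ∈ ℝ³, r > 0 and α ∈ ℝ. Suppose that for every p ∈ ℝ³ with ‖p − c‖ = r and p ≠ 0, the α-stationarity equation holds with inward unit normal ν(p) = (c − p)/r and mean curvature H = 2/r, i.e. 2/r = α·⟨(c − p)/r, p⟩/‖p‖². Then either c = 0 and α = −2, or ‖c‖ = r and α = −4. Conversely, in each of these two cases the equation holds at every nonzero point of the sphere. -/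
open scoped InnerProductSpace

lemma exists_unit_orthogonal (c : EuclideanSpace ℝ (Fin 3)) :
    ∃ u : EuclideanSpace ℝ (Fin 3), ‖u‖ = 1 ∧ ⟪c, u⟫_ℝ = 0 := by
  obtain ⟨w, hw, hw0⟩ : ∃ w, w ∈ (ℝ ∙ c)ᗮ ∧ w ≠ 0 := by
    apply Submodule.exists_mem_ne_zero_of_ne_bot
    intro hbot
    rcases eq_or_ne c 0 with rfl | hc
    · rw [Submodule.span_zero_singleton, Submodule.bot_orthogonal_eq_top] at hbot
      exact top_ne_bot hbot
    · have h1 := Submodule.finrank_add_finrank_orthogonal (𝕜 := ℝ) (ℝ ∙ c)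
      rw [hbot, finrank_span_singleton hc] at h1
      simp [finrank_euclideanSpace] at h1
  refine ⟨‖w‖⁻¹ • w, ?_, ?_⟩
  · simp [norm_smul, abs_of_nonneg, inv_mul_cancel₀ (norm_ne_zero_iff.mpr hw0)]
  · have := Submodule.mem_orthogonal (ℝ ∙ c) w |>.mp hw c (Submodule.mem_span_singleton_self c)
    rw [real_inner_smul_right, this, mul_zero]

lemma inner_key (c p : EuclideanSpace ℝ (Fin 3)) {r : ℝ} (h : ‖p - c‖ = r) :
    ⟪c - p, p⟫_ℝ = (‖c‖ ^ 2 - r ^ 2 - ‖p‖ ^ 2) / 2 := by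
  have h2 : ‖p - c‖ ^ 2 = r ^ 2 := by rw [h]
  rw [@norm_sub_sq_real] at h2
  rw [inner_sub_left, real_inner_self_eq_norm_sq, real_inner_comm]
  linarith

/-- Classification of stationary spheres: the sphere of center `c` and radius `r` satisfies
the α-stationarity equation `2/r = α⟨(c − p)/r, p⟩/‖p‖²` at every nonzero point `p` of the
sphere if and only if either `c = 0` and `α = −2` (spheres centered at the origin), or
`‖c‖ = r` and `α = −4` (spheres passing through the origin). -/
theorem stationary_spheres_classification (c : EuclideanSpace ℝ (Fin 3)) (r α : ℝ)
    (hr : 0 < r) :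
    (∀ p : EuclideanSpace ℝ (Fin 3), ‖p - c‖ = r → p ≠ 0 →
        2 / r = α * ⟪r⁻¹ • (c - p), p⟫_ℝ / ‖p‖ ^ 2) ↔
      ((c = 0 ∧ α = -2) ∨ (‖c‖ = r ∧ α = -4)) := by
  have hr0 : r ≠ 0 := ne_of_gt hr
  -- rewrite the stationarity equation into polynomial form
  have key : ∀ p : EuclideanSpace ℝ (Fin 3), ‖p - c‖ = r → p ≠ 0 →
      ((2 / r = α * ⟪r⁻¹ • (c - p), p⟫_ℝ / ‖p‖ ^ 2) ↔
        (4 + α) * ‖p‖ ^ 2 = α * (‖c‖ ^ 2 - r ^ 2)) := by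
    intro p hp hp0
    have hpn : ‖p‖ ≠ 0 := norm_ne_zero_iff.mpr hp0
    rw [real_inner_smul_left, inner_key c p hp]
    rw [div_eq_div_iff hr0 (by positivity), eq_comm]
    rw [show α * (r⁻¹ * ((‖c‖ ^ 2 - r ^ 2 - ‖p‖ ^ 2) / 2)) * r =
        (r⁻¹ * r) * (α * ((‖c‖ ^ 2 - r ^ 2 - ‖p‖ ^ 2) / 2)) by ring,
      inv_mul_cancel₀ hr0, one_mul]
    constructor <;> intro h <;> linarith
  constructor
  · intro H
    rcases eq_or_ne c 0 with rfl | hc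
    · left
      refine ⟨rfl, ?_⟩
      set p : EuclideanSpace ℝ (Fin 3) := EuclideanSpace.single 0 r with hpdef
      have hpn : ‖p‖ = r := by
        rw [hpdef, EuclideanSpace.norm_single]; exact Real.norm_of_nonneg hr.le
      have hp0 : p ≠ 0 := by
        intro h; rw [h] at hpn; simp at hpn; exact hr0 hpn.symm
      have hps : ‖p - 0‖ = r := by rw [sub_zero]; exact hpn
      have := (key p hps hp0).mp (H p hps hp0)
      rw [hpn] at this
      simp only [norm_zero] at this
      nlinarith [mul_pos hr hr]
    · right
      have hcn : 0 < ‖c‖ := norm_pos_iff.mpr hc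
      -- first point: along c
      set p₁ : EuclideanSpace ℝ (Fin 3) := (1 + r / ‖c‖) • c with hp1def
      have hs : (0:ℝ) < 1 + r / ‖c‖ := by positivity
      have hp1s : ‖p₁ - c‖ = r := by
        have : p₁ - c = (r / ‖c‖) • c := by
          rw [hp1def]; module
        rw [this, norm_smul, Real.norm_eq_abs, abs_of_pos (by positivity)]
        field_simp
      have hp1n : ‖p₁‖ = ‖c‖ + r := by
        rw [hp1def, norm_smul, Real.norm_eq_abs, abs_of_pos hs]
        field_simp
      have hp10 : p₁ ≠ 0 := by
        intro h
        rw [h, norm_zero] at hp1n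
        nlinarith
      have e1 := (key p₁ hp1s hp10).mp (H p₁ hp1s hp10)
      rw [hp1n] at e1
      -- second point: orthogonal direction
      obtain ⟨u, hu1, hu0⟩ := exists_unit_orthogonal c
      set p₂ : EuclideanSpace ℝ (Fin 3) := c + r • u with hp2def
      have hp2s : ‖p₂ - c‖ = r := by
        rw [hp2def, add_sub_cancel_left, norm_smul, Real.norm_eq_abs, abs_of_pos hr, hu1,
          mul_one]
      have hp2n : ‖p₂‖ ^ 2 = ‖c‖ ^ 2 + r ^ 2 := by
        rw [hp2def, @norm_add_sq_real, real_inner_smul_right, hu0, norm_smul,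
          Real.norm_eq_abs, abs_of_pos hr, hu1]
        ring
      have hp20 : p₂ ≠ 0 := by
        intro h
        rw [h, norm_zero] at hp2n
        nlinarith
      have e2 := (key p₂ hp2s hp20).mp (H p₂ hp2s hp20)
      rw [hp2n] at e2
      have h3 : (4 + α) * (2 * (r * ‖c‖)) = 0 := by linear_combination e1 - e2
      have h4 : (2 : ℝ) * (r * ‖c‖) ≠ 0 := by positivity
      have hα : α = -4 := by
        rcases mul_eq_zero.mp h3 with h | h
        · linarith
        · exact absurd h h4
      refine ⟨?_, hα⟩
      rw [hα] at e2
      have : ‖c‖ ^ 2 = r ^ 2 := by nlinarith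
      nlinarith [norm_nonneg c]
  · rintro (⟨rfl, rfl⟩ | ⟨hcr, rfl⟩) p hp hp0
    · rw [key p hp hp0]
      rw [sub_zero] at hp
      rw [hp]
      simp only [norm_zero]
      ring
    · rw [key p hp hp0, hcr]
      ring
end

section
/- Let α : ℝ → ℝ³ be a differentiable curve with α(s) ≠ 0 for all s, and let V : ℝ → ℝ³ satisfy ⟨α'(s), V(s)⟩ = 0 for all s. Define α̃(s) = α(s)/‖α(s)‖² and Ṽ(s) = V(s) − 2(⟨α(s),V(s)⟩/‖α(s)‖²)·α(s). Then ⟨α̃'(s), Ṽ(s)⟩ = 0 for all s. -/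
open scoped InnerProductSpace

/-- If `α` is a differentiable curve avoiding the origin and `V` is orthogonal to `α'`,
then the transformed Björling data `α̃(s) = α(s)/‖α(s)‖²` and
`Ṽ(s) = V(s) − 2(⟨α(s),V(s)⟩/‖α(s)‖²)α(s)` again satisfy `⟨α̃'(s), Ṽ(s)⟩ = 0`. -/
theorem bjorling_data_under_inversion (α V : ℝ → EuclideanSpace ℝ (Fin 3))
    (hα : Differentiable ℝ α) (hα0 : ∀ s, α s ≠ 0)
    (hV : ∀ s, ⟪deriv α s, V s⟫_ℝ = 0) :
    ∀ s, ⟪deriv (fun t => (‖α t‖ ^ 2)⁻¹ • α t) s,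
        V s - (2 * (⟪α s, V s⟫_ℝ / ‖α s‖ ^ 2)) • α s⟫_ℝ = 0 := by
  intro s
  set α' := deriv α with hα'
  have hd : HasDerivAt α (α' s) s := (hα s).hasDerivAt
  have hinner : HasDerivAt (fun t => ⟪α t, α t⟫_ℝ)
      (⟪α s, α' s⟫_ℝ + ⟪α' s, α s⟫_ℝ) s := hd.inner ℝ hd
  have hne : ⟪α s, α s⟫_ℝ ≠ 0 := by
    exact inner_self_ne_zero.mpr (hα0 s)
  have hinv : HasDerivAt (fun t => (⟪α t, α t⟫_ℝ)⁻¹)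
      (-(⟪α s, α' s⟫_ℝ + ⟪α' s, α s⟫_ℝ) / (⟪α s, α s⟫_ℝ) ^ 2) s :=
    hinner.inv hne
  have hsmul : HasDerivAt (fun t => (⟪α t, α t⟫_ℝ)⁻¹ • α t)
      ((⟪α s, α s⟫_ℝ)⁻¹ • α' s +
        (-(⟪α s, α' s⟫_ℝ + ⟪α' s, α s⟫_ℝ) / (⟪α s, α s⟫_ℝ) ^ 2) • α s) s :=
    hinv.smul hd
  have hfun : (fun t => (‖α t‖ ^ 2)⁻¹ • α t) = fun t => (⟪α t, α t⟫_ℝ)⁻¹ • α t := by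
    funext t; rw [real_inner_self_eq_norm_sq]
  rw [hfun, hsmul.deriv]
  have h0 : ⟪α' s, V s⟫_ℝ = 0 := hV s
  have hsym : ⟪α s, α' s⟫_ℝ = ⟪α' s, α s⟫_ℝ := real_inner_comm _ _
  simp only [inner_add_left, inner_smul_left, inner_sub_right, inner_smul_right,
    RCLike.ofReal_real_eq_id, id_eq, map_mul, map_div₀, map_neg, map_add,
    conj_trivial, real_inner_self_eq_norm_sq] at *
  rw [h0, hsym]
  have hn : (‖α s‖ : ℝ) ≠ 0 := norm_ne_zero_iff.mpr (hα0 s)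
  field_simp
  ring
end
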